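/- The Dirichlet kernel D_k(x) = sin((2k+1)x)/((2k+1) sin x) satisfies |D_k(x)| ≥ 2/π for all x with |x| ≤ π/(2(2k+1)), for every k ∈ ℕ. -/
import Mathlib


open Real

/-- The normalized Dirichlet kernel, with the removable singularity at `0` filled in by `1`. -/
noncomputable def dirichlet (k : ℕ) (x : ℝ) : ℝ :=
  if x = 0 then 1 else Real.sin ((2 * k + 1) * x) / ((2 * k + 1) * Real.sin x)

lemma dirichlet_neg (k : ℕ) (x : ℝ) : dirichlet k (-x) = dirichlet k x := by
  unfold dirichlet
  by_cases h : x = 0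
  · simp [h]
  · rw [if_neg (by simpa using h), if_neg h, mul_neg, Real.sin_neg, Real.sin_neg, mul_neg,
      neg_div_neg_eq]

lemma dirichlet_lb (k : ℕ) (x : ℝ) (h0 : 0 < x)
    (hx : x ≤ Real.pi / (2 * (2 * k + 1))) : 2 / Real.pi ≤ dirichlet k x := by
  set n : ℝ := 2 * k + 1 with hn
  have hk : (0 : ℝ) ≤ k := Nat.cast_nonneg k
  have hn1 : (1 : ℝ) ≤ n := by rw [hn]; linarith
  have hnpos : (0 : ℝ) < n := by linarith
  have hnx : n * x ≤ Real.pi / 2 := by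
    rw [le_div_iff₀ (by linarith)] at hx
    nlinarith
  have hxpi : x < Real.pi := by nlinarith [Real.pi_pos]
  have hs : 0 < Real.sin x := Real.sin_pos_of_pos_of_lt_pi h0 hxpi
  have hnx0 : 0 ≤ n * x := by positivity
  have hsin1 : 2 / Real.pi * (n * x) ≤ Real.sin (n * x) :=
    Real.mul_le_sin hnx0 hnx
  have hsin2 : Real.sin x ≤ x := Real.sin_le h0.le
  have hD : dirichlet k x = Real.sin (n * x) / (n * Real.sin x) := by
    rw [dirichlet, if_neg h0.ne']
  rw [hD]
  have h1 : 2 / Real.pi = (2 / Real.pi * (n * x)) / (n * x) := by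
    field_simp
  rw [h1]
  apply div_le_div₀ (le_trans (mul_nonneg (by positivity) hnx0) hsin1) hsin1
    (mul_pos hnpos hs)
  exact mul_le_mul_of_nonneg_left hsin2 (by linarith)

/-- main-lobe lower bound `|D_k(x)| ≥ 2/π` for `|x| ≤ π/(2(2k+1))`. -/
theorem stmt_7 (k : ℕ) (x : ℝ) (hx : |x| ≤ Real.pi / (2 * (2 * k + 1))) :
    2 / Real.pi ≤ |dirichlet k x| := by
  rcases lt_trichotomy x 0 with h | h | h
  · have := dirichlet_lb k (-x) (by linarith) (by rwa [abs_of_neg h] at hx)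
    rw [dirichlet_neg] at this
    exact this.trans (le_abs_self _)
  · subst h
    simp only [dirichlet, if_pos rfl, if_true, abs_one]
    rw [div_le_one Real.pi_pos]
    linarith [Real.pi_gt_three]
  · have := dirichlet_lb k x h (by rwa [abs_of_pos h] at hx)
    exact this.trans (le_abs_self _)
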